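/- Define S2(x, y) := max( max(2x, y−x) + (y−x), 1−y ) + (1−y) for 0 < x < y < 1. Then for all 0 < x1 < x2 < 1, max( S2(x1, x2), S2(1−x2, 1−x1) ) ≥ 5/4, with equality if and only if (x1, x2) = (1/4, 3/4). That is, with two repeater nodes, the minimum over repeater placements of the larger of the two directional unambiguous transmission times (A to B and B to A) equals 5/4 in units of L/c, attained at positions L/4 and 3L/4. -/
import Mathlib


/-- The two-repeater unambiguous transmission time from one end to the other. -/
noncomputable def S2 (x y : ℝ) : ℝ :=
  max (max (2 * x) (y - x) + (y - x)) (1 - y) + (1 - y)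

/-- For all `0 < x1 < x2 < 1`, the larger of the two directional transmission
times `max (S2 x1 x2) (S2 (1-x2) (1-x1))` is at least `5/4`, with equality iff
`(x1, x2) = (1/4, 3/4)`. -/
theorem two_repeater_bidirectional (x1 x2 : ℝ)
    (h0 : 0 < x1) (h12 : x1 < x2) (h21 : x2 < 1) :
    5 / 4 ≤ max (S2 x1 x2) (S2 (1 - x2) (1 - x1)) ∧
    (max (S2 x1 x2) (S2 (1 - x2) (1 - x1)) = 5 / 4 ↔ x1 = 1 / 4 ∧ x2 = 3 / 4) := by
  have hF1 : 1 + x1 ≤ S2 x1 x2 := by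
    unfold S2
    have h1 := le_max_left (2 * x1) (x2 - x1)
    have h2 := le_max_left (max (2 * x1) (x2 - x1) + (x2 - x1)) (1 - x2)
    linarith
  have hF2 : 1 + x2 - 2 * x1 ≤ S2 x1 x2 := by
    unfold S2
    have h1 := le_max_right (2 * x1) (x2 - x1)
    have h2 := le_max_left (max (2 * x1) (x2 - x1) + (x2 - x1)) (1 - x2)
    linarith
  have hB1 : 2 - x2 ≤ S2 (1 - x2) (1 - x1) := by
    unfold S2
    have h1 := le_max_left (2 * (1 - x2)) ((1 - x1) - (1 - x2))
    have h2 := le_max_left (max (2 * (1 - x2)) ((1 - x1) - (1 - x2)) + ((1 - x1) - (1 - x2)))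
      (1 - (1 - x1))
    linarith
  have hB2 : 2 * x2 - x1 ≤ S2 (1 - x2) (1 - x1) := by
    unfold S2
    have h1 := le_max_right (2 * (1 - x2)) ((1 - x1) - (1 - x2))
    have h2 := le_max_left (max (2 * (1 - x2)) ((1 - x1) - (1 - x2)) + ((1 - x1) - (1 - x2)))
      (1 - (1 - x1))
    linarith
  have hMF : S2 x1 x2 ≤ max (S2 x1 x2) (S2 (1 - x2) (1 - x1)) := le_max_left _ _
  have hMB : S2 (1 - x2) (1 - x1) ≤ max (S2 x1 x2) (S2 (1 - x2) (1 - x1)) := le_max_right _ _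
  have hlb : 5 / 4 ≤ max (S2 x1 x2) (S2 (1 - x2) (1 - x1)) := by
    rcases le_or_gt (x2 - x1) (1 / 2) with h | h
    · linarith
    · linarith
  refine ⟨hlb, ⟨fun hM => ?_, fun ⟨h1, h2⟩ => ?_⟩⟩
  · rw [hM] at hMF hMB
    constructor <;> linarith
  · subst h1; subst h2
    have : max (S2 (1 / 4 : ℝ) (3 / 4)) (S2 (1 - 3 / 4) (1 - 1 / 4)) = 5 / 4 := by
      norm_num [S2]
    simpa using this
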